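/- Let 𝕂 be a non-discrete Hausdorff topological field, E a Hausdorff topological 𝕂-vector space, U ⊆ 𝕂 open and non-empty, and f : U → E a map. Then f is C¹ in the BGN sense if and only if there exists a continuous map f⟨¹⟩ : U × U → E such that f(s) − f(t) = (s − t) • f⟨¹⟩(s,t) for all s, t ∈ U; in this case df(t)(1) = f⟨¹⟩(t,t), and t ↦ f⟨¹⟩(t,t) is a continuous curve U → E. -/

import Mathlib

open Set

/-! The extension `f¹` of the difference quotient is unique: off `t = 0` it is forced by the
difference quotient itself, and since `𝕂 \ {0}` is dense the points with `t ≠ 0` are dense in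
its open domain. The two notions of `C¹` are related by restricting `f¹` to `v = 1` and by
rescaling `f⟨¹⟩`; comparing `f¹` with the rescaled `f⟨¹⟩` at `(t, 1, 0)` identifies `df(t)(1)`. -/

section DiffQuot

variable {𝕂 F E : Type*} [TopologicalSpace 𝕂] [AddCommGroup F] [TopologicalSpace F]
  [AddCommGroup E] [TopologicalSpace E]

def diffQuotDomain [Ring 𝕂] [Module 𝕂 F] (U : Set F) : Set (F × F × 𝕂) :=
  {p | p.1 ∈ U ∧ p.1 + p.2.2 • p.2.1 ∈ U}

/-- `f₁` is a continuous extension to `t = 0` of the difference quotient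
`(x, v, t) ↦ (f (x + t • v) - f x) / t`, i.e. the map `f¹` of Bertram–Glöckner–Neeb. -/
def IsDiffQuotExtension [Ring 𝕂] [Module 𝕂 F] [Module 𝕂 E] (U : Set F) (f : F → E)
    (f₁ : F × F × 𝕂 → E) : Prop :=
  ContinuousOn f₁ (diffQuotDomain U) ∧
    ∀ p : F × F × 𝕂, p.1 ∈ U → p.1 + p.2.2 • p.2.1 ∈ U →
      f (p.1 + p.2.2 • p.2.1) - f p.1 = p.2.2 • f₁ p

theorem isOpen_diffQuotDomain [Ring 𝕂] [Module 𝕂 F] [ContinuousAdd F] [ContinuousSMul 𝕂 F]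
    {U : Set F} (hU : IsOpen U) : IsOpen (diffQuotDomain (𝕂 := 𝕂) U) :=
  (hU.preimage continuous_fst).inter <|
    hU.preimage <| continuous_fst.add <| continuous_snd.snd.smul continuous_snd.fst

theorem IsDiffQuotExtension.eqOn [DivisionRing 𝕂] [Module 𝕂 F] [Module 𝕂 E] [ContinuousAdd F]
    [ContinuousSMul 𝕂 F] [T2Space E] (hK : Dense {t : 𝕂 | t ≠ 0}) {U : Set F} (hU : IsOpen U)
    {f : F → E} {f₁ f₂ : F × F × 𝕂 → E} (h₁ : IsDiffQuotExtension U f f₁)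
    (h₂ : IsDiffQuotExtension U f f₂) : EqOn f₁ f₂ (diffQuotDomain U) := by
  have hdense : Dense {p : F × F × 𝕂 | p.2.2 ≠ 0} :=
    hK.preimage (isOpenMap_snd.comp isOpenMap_snd)
  refine EqOn.of_subset_closure ?_ h₁.1 h₂.1 inter_subset_left
    (hdense.open_subset_closure_inter (isOpen_diffQuotDomain hU))
  rintro p ⟨⟨hx, hxt⟩, ht⟩
  exact smul_right_injective E ht ((h₁.2 p hx hxt).symm.trans (h₂.2 p hx hxt))

end DiffQuot

section Curve

variable {𝕂 E : Type*} [Ring 𝕂] [TopologicalSpace 𝕂] [IsTopologicalRing 𝕂]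
  [AddCommGroup E] [Module 𝕂 E] [TopologicalSpace E]

/-- The map `f⟨¹⟩` of Bertram–Glöckner–Neeb. -/
def IsDividedDifference (U : Set 𝕂) (f : 𝕂 → E) (g : 𝕂 × 𝕂 → E) : Prop :=
  ContinuousOn g (U ×ˢ U) ∧ ∀ s ∈ U, ∀ t ∈ U, f s - f t = (s - t) • g (s, t)

theorem IsDiffQuotExtension.isDividedDifference {U : Set 𝕂} {f : 𝕂 → E} {f₁ : 𝕂 × 𝕂 × 𝕂 → E}
    (h : IsDiffQuotExtension U f f₁) :
    IsDividedDifference U f fun p => f₁ (p.2, 1, p.1 - p.2) := by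
  refine ⟨h.1.comp (by fun_prop) fun p hp => ⟨hp.2, by simpa using hp.1⟩, fun s hs t ht => ?_⟩
  simpa using h.2 (t, 1, s - t) ht (by simpa using hs)

theorem IsDividedDifference.isDiffQuotExtension [ContinuousSMul 𝕂 E] {U : Set 𝕂} {f : 𝕂 → E}
    {g : 𝕂 × 𝕂 → E} (h : IsDividedDifference U f g) :
    IsDiffQuotExtension U f fun p : 𝕂 × 𝕂 × 𝕂 => p.2.1 • g (p.1 + p.2.2 • p.2.1, p.1) := by
  refine ⟨continuous_snd.fst.continuousOn.smul
    (h.1.comp (by fun_prop) fun p hp => ⟨hp.2, hp.1⟩), fun p hx hxt => ?_⟩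
  rw [h.2 _ hxt _ hx, add_sub_cancel_left, smul_assoc]

end Curve

theorem stmt_17_general (𝕂 : Type*) [Field 𝕂] [TopologicalSpace 𝕂] [IsTopologicalRing 𝕂]
    (hK : Dense {t : 𝕂 | t ≠ 0})
    (E : Type*) [AddCommGroup E] [Module 𝕂 E] [TopologicalSpace E]
    [ContinuousSMul 𝕂 E] [T2Space E]
    (U : Set 𝕂) (hU : IsOpen U) (f : 𝕂 → E) :
    ((∃ f1 : 𝕂 × 𝕂 × 𝕂 → E,
        ContinuousOn f1 {p : 𝕂 × 𝕂 × 𝕂 | p.1 ∈ U ∧ p.1 + p.2.2 • p.2.1 ∈ U} ∧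
        ∀ p : 𝕂 × 𝕂 × 𝕂, p.1 ∈ U → p.1 + p.2.2 • p.2.1 ∈ U →
          f (p.1 + p.2.2 • p.2.1) - f p.1 = p.2.2 • f1 p) ↔
      (∃ g : 𝕂 × 𝕂 → E, ContinuousOn g (U ×ˢ U) ∧
        ∀ s ∈ U, ∀ t ∈ U, f s - f t = (s - t) • g (s, t))) ∧
    ∀ g : 𝕂 × 𝕂 → E, ContinuousOn g (U ×ˢ U) →
      (∀ s ∈ U, ∀ t ∈ U, f s - f t = (s - t) • g (s, t)) →
      ContinuousOn (fun t : 𝕂 => g (t, t)) U ∧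
      ∀ f1 : 𝕂 × 𝕂 × 𝕂 → E,
        ContinuousOn f1 {p : 𝕂 × 𝕂 × 𝕂 | p.1 ∈ U ∧ p.1 + p.2.2 • p.2.1 ∈ U} →
        (∀ p : 𝕂 × 𝕂 × 𝕂, p.1 ∈ U → p.1 + p.2.2 • p.2.1 ∈ U →
          f (p.1 + p.2.2 • p.2.1) - f p.1 = p.2.2 • f1 p) →
        ∀ t ∈ U, f1 (t, 1, 0) = g (t, t) := by
  refine ⟨⟨fun ⟨f₁, h⟩ => ⟨_, IsDiffQuotExtension.isDividedDifference h⟩,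
    fun ⟨g, h⟩ => ⟨_, IsDividedDifference.isDiffQuotExtension h⟩⟩, fun g hgc hge => ⟨?_, ?_⟩⟩
  · exact hgc.comp (continuous_id.prodMk continuous_id).continuousOn fun t ht => ⟨ht, ht⟩
  · intro f₁ hc he t ht
    have hg : IsDividedDifference U f g := ⟨hgc, hge⟩
    simpa using IsDiffQuotExtension.eqOn hK hU ⟨hc, he⟩ hg.isDiffQuotExtension
      (x := (t, 1, 0)) ⟨ht, by simpa using ht⟩

/-- Lemma 6.1 of Bertram–Glöckner–Neeb: a curve `f : U → E` (with `U ⊆ 𝕂` open, nonempty)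
is C¹ in the BGN sense iff there is a continuous map `f⟨¹⟩ : U × U → E` with
`f(s) − f(t) = (s − t) • f⟨¹⟩(s,t)` for all `s, t ∈ U`; in that case `df(t)(1) = f⟨¹⟩(t,t)`
and `t ↦ f⟨¹⟩(t,t)` is a continuous curve on `U`. -/
theorem stmt_17 (𝕂 : Type*) [Field 𝕂] [TopologicalSpace 𝕂] [IsTopologicalRing 𝕂] [T2Space 𝕂]
    (hK : Dense {t : 𝕂 | t ≠ 0})
    (E : Type*) [AddCommGroup E] [Module 𝕂 E] [TopologicalSpace E]
    [IsTopologicalAddGroup E] [ContinuousSMul 𝕂 E] [T2Space E]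
    (U : Set 𝕂) (hU : IsOpen U) (hne : U.Nonempty) (f : 𝕂 → E) :
    ((∃ f1 : 𝕂 × 𝕂 × 𝕂 → E,
        ContinuousOn f1 {p : 𝕂 × 𝕂 × 𝕂 | p.1 ∈ U ∧ p.1 + p.2.2 • p.2.1 ∈ U} ∧
        ∀ p : 𝕂 × 𝕂 × 𝕂, p.1 ∈ U → p.1 + p.2.2 • p.2.1 ∈ U →
          f (p.1 + p.2.2 • p.2.1) - f p.1 = p.2.2 • f1 p) ↔
      (∃ g : 𝕂 × 𝕂 → E, ContinuousOn g (U ×ˢ U) ∧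
        ∀ s ∈ U, ∀ t ∈ U, f s - f t = (s - t) • g (s, t))) ∧
    ∀ g : 𝕂 × 𝕂 → E, ContinuousOn g (U ×ˢ U) →
      (∀ s ∈ U, ∀ t ∈ U, f s - f t = (s - t) • g (s, t)) →
      ContinuousOn (fun t : 𝕂 => g (t, t)) U ∧
      ∀ f1 : 𝕂 × 𝕂 × 𝕂 → E,
        ContinuousOn f1 {p : 𝕂 × 𝕂 × 𝕂 | p.1 ∈ U ∧ p.1 + p.2.2 • p.2.1 ∈ U} →
        (∀ p : 𝕂 × 𝕂 × 𝕂, p.1 ∈ U → p.1 + p.2.2 • p.2.1 ∈ U →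
          f (p.1 + p.2.2 • p.2.1) - f p.1 = p.2.2 • f1 p) →
        ∀ t ∈ U, f1 (t, 1, 0) = g (t, t) :=
  stmt_17_general 𝕂 hK E U hU f
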